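/- arXiv:0706.3441 — 2 statements merged into one kernel-verified Lean document; each statement's English description precedes it below -/
import Mathlib

section
/- Let K/k be an extension of H-graded fields, G a finite group of graded automorphisms of K fixing k pointwise, L = K^G, and ψ: P_{K/k} → P_{L/k} the map O ↦ O ∩ L between Zariski–Riemann spaces of graded valuation rings. If x ∈ P_{L/k} with fiber S = ψ^{-1}(x), and x̄ denotes the set of generalizations of x (points whose valuation ring contains that of x), then ψ^{-1}(x̄) equals the set of all generalizations of points of S. -/
open scoped DirectSum

/-- An `H`-graded field: a nonzero commutative ring with an internal grading by the
commutative group `H` in which every nonzero homogeneous element is invertible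
(with homogeneous inverse). -/
structure GradedField (H : Type*) [CommGroup H] [DecidableEq H] (K : Type*) [CommRing K] where
  comp : H → AddSubgroup K
  one_mem : (1 : K) ∈ comp 1
  mul_mem : ∀ {g h : H} {x y : K}, x ∈ comp g → y ∈ comp h → x * y ∈ comp (g * h)
  isInternal : DirectSum.IsInternal fun h : H => comp h
  zero_ne_one : (0 : K) ≠ 1
  inv_mem : ∀ {h : H} {x : K}, x ∈ comp h → x ≠ 0 → ∃ y ∈ comp h⁻¹, x * y = 1

namespace GradedField

variable {H : Type*} [CommGroup H] [DecidableEq H] {K : Type*} [CommRing K] (F : GradedField H K)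

/-- A homogeneous element. -/
def Homogeneous (x : K) : Prop := ∃ h, x ∈ F.comp h

/-- A subring is graded if each of its elements is a sum of homogeneous elements of the
subring. -/
def IsGradedSubring (R : Subring K) : Prop :=
  ∀ x ∈ R, x ∈ AddSubgroup.closure {y : K | y ∈ R ∧ F.Homogeneous y}

/-- A graded subfield: a graded subring closed under inverses of nonzero homogeneous
elements. -/
structure IsGradedSubfield (L : Subring K) : Prop where
  graded : F.IsGradedSubring L
  inv_mem : ∀ x ∈ L, F.Homogeneous x → x ≠ 0 → Ring.inverse x ∈ L

/-- A graded valuation ring of the graded subfield `L`: a graded subring `R ⊆ L` such that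
every nonzero homogeneous element of `L` lies in `R` or has its inverse in `R`. -/
def IsGradedValRing (L R : Subring K) : Prop :=
  R ≤ L ∧ F.IsGradedSubring R ∧
    ∀ x ∈ L, F.Homogeneous x → x ≠ 0 → (x ∈ R ∨ Ring.inverse x ∈ R)

/-- The identity component `K₁`, as a subring. -/
def oneComponent : Subring K where
  carrier := F.comp 1
  one_mem' := F.one_mem
  mul_mem' := fun ha hb => by simpa using F.mul_mem ha hb
  add_mem' := fun ha hb => (F.comp 1).add_mem ha hb
  zero_mem' := (F.comp 1).zero_mem
  neg_mem' := fun ha => (F.comp 1).neg_mem ha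

theorem mem_oneComponent {x : K} : x ∈ F.oneComponent ↔ x ∈ F.comp 1 := Iff.rfl

/-- The value group `ρ(L^×) ⊆ H` of a graded subfield `L`. -/
def valueGroup (L : Subring K)
    (hL : ∀ x ∈ L, F.Homogeneous x → x ≠ 0 → Ring.inverse x ∈ L) : Subgroup H where
  carrier := {h | ∃ x ∈ F.comp h, x ≠ 0 ∧ x ∈ L}
  one_mem' := ⟨1, F.one_mem, Ne.symm F.zero_ne_one, L.one_mem⟩
  mul_mem' := by
    rintro g h ⟨x, hx, hx0, hxL⟩ ⟨y, hy, hy0, hyL⟩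
    obtain ⟨x', hx', hxx'⟩ := F.inv_mem hx hx0
    obtain ⟨y', hy', hyy'⟩ := F.inv_mem hy hy0
    refine ⟨x * y, F.mul_mem hx hy, ?_, L.mul_mem hxL hyL⟩
    intro h0
    have h1 : x * y * (x' * y') = 1 := by rw [mul_mul_mul_comm, hxx', hyy', one_mul]
    rw [h0, zero_mul] at h1
    exact F.zero_ne_one h1
  inv_mem' := by
    rintro g ⟨x, hx, hx0, hxL⟩
    obtain ⟨y, hy, hxy⟩ := F.inv_mem hx hx0
    have hu : IsUnit x := IsUnit.of_mul_eq_one y hxy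
    have hyx : Ring.inverse x = y := by
      calc Ring.inverse x = Ring.inverse x * (x * y) := by rw [hxy, mul_one]
        _ = Ring.inverse x * x * y := by ring
        _ = y := by rw [Ring.inverse_mul_cancel x hu, one_mul]
    refine ⟨y, hy, ?_, ?_⟩
    · intro h0; rw [h0, mul_zero] at hxy; exact F.zero_ne_one hxy
    · rw [← hyx]; exact hL x hxL ⟨g, hx⟩ hx0

/-- The value group `ρ(K^×)` of the whole graded field. -/
def fullValueGroup : Subgroup H :=
  F.valueGroup ⊤ (fun _ _ _ _ => Subring.mem_top _)

/-- `K₁` as a module over `L₁ = K₁ ∩ L`. -/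
def oneSubmodule (L : Subring K) : Submodule ↥(F.oneComponent ⊓ L) K where
  carrier := F.comp 1
  add_mem' := fun ha hb => (F.comp 1).add_mem ha hb
  zero_mem' := (F.comp 1).zero_mem
  smul_mem' := fun c x hx => by
    have hc : (c : K) ∈ F.comp 1 := ((Subring.mem_inf).mp c.2).1
    have := F.mul_mem hc hx
    simpa [Subring.smul_def] using this

/-- A graded automorphism: a ring automorphism preserving each graded component. -/
def IsGradedAut (σ : RingAut K) : Prop := ∀ (h : H) (x : K), x ∈ F.comp h → σ x ∈ F.comp h

end GradedField

/-- The fixed subring `K^G` of a group of ring automorphisms. -/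
def fixedSubring {K : Type*} [CommRing K] (G : Subgroup (RingAut K)) : Subring K where
  carrier := {x | ∀ σ ∈ G, σ x = x}
  one_mem' := fun σ _ => map_one σ
  mul_mem' := fun ha hb σ hσ => by rw [map_mul, ha σ hσ, hb σ hσ]
  add_mem' := fun ha hb σ hσ => by rw [map_add, ha σ hσ, hb σ hσ]
  zero_mem' := fun σ _ => map_zero σ
  neg_mem' := fun ha σ hσ => by rw [map_neg, ha σ hσ]

theorem mem_fixedSubring {K : Type*} [CommRing K] {G : Subgroup (RingAut K)} {x : K} :
    x ∈ fixedSubring G ↔ ∀ σ ∈ G, σ x = x := Iff.rfl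


namespace GradedField

variable {H : Type*} [CommGroup H] [DecidableEq H] {K : Type*} [CommRing K]
variable (F : GradedField H K)

/-- Decomposition of an element into its homogeneous components. -/
noncomputable def decompose (x : K) : ⨁ h : H, ↥(F.comp h) :=
  (Equiv.ofBijective _ F.isInternal).symm x

/-- The degree-`h` homogeneous component of `x`. -/
noncomputable def component (h : H) (x : K) : K := (F.decompose x h : K)

/-- The inertia subgroup of `G`: graded automorphisms in `G` acting trivially on `K₁`. -/
def inertia (G : Subgroup (RingAut K)) : Subgroup (RingAut K) where
  carrier := {σ | σ ∈ G ∧ ∀ x ∈ F.comp 1, σ x = x}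
  one_mem' := ⟨G.one_mem, fun _ _ => rfl⟩
  mul_mem' := fun {a b} ha hb => ⟨G.mul_mem ha.1 hb.1, fun x hx => by
    show a (b x) = x
    rw [hb.2 x hx, ha.2 x hx]⟩
  inv_mem' := fun {a} ha => ⟨G.inv_mem ha.1, fun x hx => by
    conv_lhs => rw [← ha.2 x hx]
    exact a.symm_apply_apply x⟩

theorem mem_inertia {G : Subgroup (RingAut K)} {σ : RingAut K} :
    σ ∈ F.inertia G ↔ σ ∈ G ∧ ∀ x ∈ F.comp 1, σ x = x := Iff.rfl

end GradedField

/-- A subring `S` containing a subring `L`, viewed as an `L`-submodule of the ambient ring. -/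
def Subring.toSubmoduleOver {K : Type*} [CommRing K] (L S : Subring K) (hLS : L ≤ S) :
    Submodule ↥L K where
  carrier := S
  add_mem' := fun ha hb => S.add_mem ha hb
  zero_mem' := S.zero_mem
  smul_mem' := fun c x hx => S.mul_mem (hLS c.2) hx

section ZR

variable {H : Type*} [CommGroup H] [DecidableEq H] {K : Type*} [CommRing K]

/-- The Zariski–Riemann space of graded valuation rings of `K` containing `k₀`. -/
def GradedField.ZR (F : GradedField H K) (k₀ : Subring K) : Type _ :=
  {O : Subring K // F.IsGradedValRing ⊤ O ∧ k₀ ≤ O}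

/-- The set of homogeneous units (nonzero homogeneous elements) of `K`. -/
def GradedField.HomogUnits (F : GradedField H K) : Type _ :=
  {x : K // x ≠ 0 ∧ F.Homogeneous x}

open Classical in
/-- The embedding of the Zariski–Riemann space into `{0,1}^{K^×}` via characteristic
functions. -/
noncomputable def GradedField.chi (F : GradedField H K) (k₀ : Subring K) (O : F.ZR k₀) :
    F.HomogUnits → Bool :=
  fun x => decide (x.1 ∈ O.1)

/-- Basic open sets `P{F}∖{G}` of the constructible topology, for finite sets `F`, `G` of
homogeneous units. -/
def GradedField.constructibleBasis (F : GradedField H K) (k₀ : Subring K) :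
    Set (Set (F.ZR k₀)) :=
  {s | ∃ Fs Gs : Finset K, (∀ a ∈ Fs, a ≠ 0 ∧ F.Homogeneous a) ∧
    (∀ b ∈ Gs, b ≠ 0 ∧ F.Homogeneous b) ∧
    s = {O : F.ZR k₀ | (∀ a ∈ Fs, a ∈ O.1) ∧ ∀ b ∈ Gs, b ∉ O.1}}

/-- The constructible topology on the Zariski–Riemann space. -/
def GradedField.constructibleTop (F : GradedField H K) (k₀ : Subring K) :
    TopologicalSpace (F.ZR k₀) :=
  TopologicalSpace.generateFrom (F.constructibleBasis k₀)

/-!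
The inclusion `⊇` is immediate, so the content is an extension theorem: if `x` is a graded
valuation ring of `L = K^G` and `A ⊇ x` a graded valuation ring of `K`, there is a graded valuation
ring `A₀ ⊆ A` of `K` with `A₀ ∩ L = x`, a graded form of Chevalley's extension theorem. By Zorn's
lemma take `R` maximal among the graded rings `x ⊆ R ⊆ A` that contain the homogeneous non-units
of `A` and in which the homogeneous non-units of `x` generate a proper ideal `I`. Chevalley's lemma
(`1` cannot lie in both `I R[z]` and `I R[z⁻¹]`) makes `R` a graded valuation ring, and properness
of `I` forces `R ∩ L = x`. The family is nonempty because the degree-one non-units of a graded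
valuation ring are closed under addition, so `1` is never the sum of a degree-one non-unit of `x`
and one of `A`.
-/

namespace Subring

variable {K : Type*} [CommRing K] {R R' : Subring K} {s : Set K} {r w : K}

def idealSpan (R : Subring K) (s : Set K) : AddSubgroup K :=
  AddSubgroup.closure {w | ∃ r ∈ R, ∃ m ∈ s, w = r * m}

theorem mul_mem_idealSpan {m : K} (hr : r ∈ R) (hm : m ∈ s) : r * m ∈ R.idealSpan s :=
  AddSubgroup.subset_closure ⟨r, hr, m, hm, rfl⟩

theorem subset_idealSpan : s ⊆ R.idealSpan s := fun m hm => by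
  simpa using mul_mem_idealSpan R.one_mem hm

theorem idealSpan_mono (h : R ≤ R') : R.idealSpan s ≤ R'.idealSpan s :=
  AddSubgroup.closure_mono fun _ ⟨r, hr, m, hm, hw⟩ => ⟨r, h hr, m, hm, hw⟩

theorem mul_mem_idealSpan_left (hr : r ∈ R) (hw : w ∈ R.idealSpan s) :
    r * w ∈ R.idealSpan s := by
  suffices R.idealSpan s ≤ (R.idealSpan s).comap (AddMonoidHom.mulLeft r) from this hw
  refine AddSubgroup.closure_le _ |>.mpr ?_
  rintro _ ⟨r', hr', m, hm, rfl⟩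
  simpa [mul_assoc] using mul_mem_idealSpan (R.mul_mem hr hr') hm

theorem idealSpan_le (h : s ⊆ R) : R.idealSpan s ≤ R.toAddSubgroup :=
  AddSubgroup.closure_le _ |>.mpr fun _ ⟨_, hr, _, hm, hw⟩ => hw ▸ R.mul_mem hr (h hm)

theorem exists_mem_idealSpan_of_mem_sSup {c : Set (Subring K)} (hne : c.Nonempty)
    (hc : DirectedOn (· ≤ ·) c) (hw : w ∈ (sSup c).idealSpan s) :
    ∃ R ∈ c, w ∈ R.idealSpan s := by
  have : Nonempty c := hne.to_subtype
  have hdir : Directed (· ≤ ·) fun R : c => R.1.idealSpan s := fun R₁ R₂ => by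
    obtain ⟨R, hRc, h₁, h₂⟩ := hc R₁ R₁.2 R₂ R₂.2
    exact ⟨⟨R, hRc⟩, idealSpan_mono h₁, idealSpan_mono h₂⟩
  suffices (sSup c).idealSpan s ≤ ⨆ R : c, R.1.idealSpan s by
    obtain ⟨R, hR⟩ := (AddSubgroup.mem_iSup_of_directed hdir).mp (this hw)
    exact ⟨R, R.2, hR⟩
  refine AddSubgroup.closure_le _ |>.mpr ?_
  rintro _ ⟨r, hr, m, hm, rfl⟩
  obtain ⟨R, hRc, hrR⟩ := (mem_sSup_of_directedOn hne hc).mp hr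
  exact AddSubgroup.mem_iSup_of_mem (⟨R, hRc⟩ : c) (mul_mem_idealSpan hrR hm)

def nonunits (R : Subring K) : Set K := {w | w ∈ R ∧ ∀ t ∈ R, w * t ≠ 1}

theorem mul_mem_nonunits (hw : w ∈ R.nonunits) (hr : r ∈ R) : w * r ∈ R.nonunits :=
  ⟨R.mul_mem hw.1 hr, fun t ht h => hw.2 (r * t) (R.mul_mem hr ht) (by rw [← h, mul_assoc])⟩

theorem mem_nonunits_of_le (h : R ≤ R') (hw : w ∈ R) (hw' : w ∈ R'.nonunits) :
    w ∈ R.nonunits :=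
  ⟨hw, fun t ht => hw'.2 t (h ht)⟩

end Subring

namespace AddSubgroup

variable {K : Type*} [CommRing K] {I : AddSubgroup K} {R : Subring K} {a b c r w : K} {n m : ℕ}

def powerCombos (I : AddSubgroup K) (a : K) (n : ℕ) : AddSubgroup K :=
  closure {w | ∃ c ∈ I, ∃ i < n, w = c * a ^ i}

theorem mul_pow_mem_powerCombos {i : ℕ} (hc : c ∈ I) (hi : i < n) :
    c * a ^ i ∈ I.powerCombos a n :=
  subset_closure ⟨c, hc, i, hi, rfl⟩

theorem powerCombos_zero : I.powerCombos a 0 = ⊥ := by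
  simp [powerCombos]

theorem powerCombos_one : I.powerCombos a 1 = I := by
  simp [powerCombos]

theorem powerCombos_mono : Monotone (I.powerCombos a) := fun _ _ h =>
  closure_mono fun _ ⟨c, hc, i, hi, hw⟩ => ⟨c, hc, i, lt_of_lt_of_le hi h, hw⟩

theorem le_powerCombos (hn : n ≠ 0) : I ≤ I.powerCombos a n := fun c hc => by
  simpa using mul_pow_mem_powerCombos (a := a) hc (Nat.pos_of_ne_zero hn)

theorem mul_mem_powerCombos (hr : ∀ c ∈ I, r * c ∈ I) (hw : w ∈ I.powerCombos a n) :
    r * w ∈ I.powerCombos a n := by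
  suffices I.powerCombos a n ≤ (I.powerCombos a n).comap (AddMonoidHom.mulLeft r) from this hw
  refine closure_le _ |>.mpr ?_
  rintro _ ⟨c, hc, i, hi, rfl⟩
  simpa [mul_assoc] using mul_pow_mem_powerCombos (hr c hc) hi

theorem mul_mem_powerCombos_succ (hw : w ∈ I.powerCombos a n) :
    a * w ∈ I.powerCombos a (n + 1) := by
  suffices I.powerCombos a n ≤ (I.powerCombos a (n + 1)).comap (AddMonoidHom.mulLeft a) from
    this hw
  refine closure_le _ |>.mpr ?_
  rintro _ ⟨c, hc, i, hi, rfl⟩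
  simpa [pow_succ, mul_comm, mul_left_comm] using
    mul_pow_mem_powerCombos (a := a) hc (Nat.succ_lt_succ hi)

theorem exists_add_mul_pow_of_mem_powerCombos_succ (hw : w ∈ I.powerCombos a (n + 1)) :
    ∃ v ∈ I.powerCombos a n, ∃ c ∈ I, w = v + c * a ^ n := by
  suffices
      I.powerCombos a (n + 1) ≤ I.powerCombos a n ⊔ I.map (AddMonoidHom.mulRight (a ^ n)) by
    obtain ⟨v, hv, _, ⟨c, hc, rfl⟩, rfl⟩ := mem_sup.mp (this hw)
    exact ⟨v, hv, c, hc, rfl⟩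
  refine closure_le _ |>.mpr ?_
  rintro _ ⟨c, hc, i, hi, rfl⟩
  rcases (Nat.lt_succ_iff_lt_or_eq.mp hi) with hi | rfl
  · exact mem_sup_left (mul_pow_mem_powerCombos hc hi)
  · exact mem_sup_right ⟨c, hc, rfl⟩

theorem exists_add_mul_of_mem_powerCombos_succ (hw : w ∈ I.powerCombos a (n + 1)) :
    ∃ c ∈ I, ∃ v ∈ I.powerCombos a n, w = c + a * v := by
  suffices I.powerCombos a (n + 1) ≤ I ⊔ (I.powerCombos a n).map (AddMonoidHom.mulLeft a) by
    obtain ⟨c, hc, _, ⟨v, hv, rfl⟩, rfl⟩ := mem_sup.mp (this hw)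
    exact ⟨c, hc, v, hv, rfl⟩
  refine closure_le _ |>.mpr ?_
  rintro _ ⟨c, hc, i, hi, rfl⟩
  rcases i with _ | i
  · exact mem_sup_left (by simpa using hc)
  · refine mem_sup_right
      ⟨c * a ^ i, mul_pow_mem_powerCombos hc (Nat.lt_of_succ_lt_succ hi), ?_⟩
    simp only [AddMonoidHom.coe_mulLeft, pow_succ]
    ring

theorem pow_mul_mem_powerCombos (hab : a * b = 1) (hm : m ≤ n + 1)
    (hw : w ∈ I.powerCombos b m) : a ^ n * w ∈ I.powerCombos a (n + 1) := by
  suffices I.powerCombos b m ≤ (I.powerCombos a (n + 1)).comap (AddMonoidHom.mulLeft (a ^ n))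
    from this hw
  refine closure_le _ |>.mpr ?_
  rintro _ ⟨c, hc, j, hj, rfl⟩
  have hjn : j ≤ n := by omega
  have : a ^ n * (c * b ^ j) = c * a ^ (n - j) := by
    rw [← Nat.sub_add_cancel hjn, pow_add, Nat.add_sub_cancel, mul_comm c, mul_assoc,
      ← mul_assoc (a ^ j), ← mul_pow, hab, one_pow, one_mul, mul_comm]
  simpa [this] using mul_pow_mem_powerCombos hc (show n - j < n + 1 by omega)

theorem one_mem_powerCombos_of_one_mem_powerCombos_succ (hIR : I ≤ R.toAddSubgroup)
    (hRI : ∀ r ∈ R, ∀ c ∈ I, r * c ∈ I) (hab : a * b = 1) (hm : m ≤ n + 1)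
    (ha : 1 ∈ I.powerCombos a (n + 2)) (hb : 1 ∈ I.powerCombos b (m + 1)) :
    1 ∈ I.powerCombos a (n + 1) := by
  obtain ⟨v, hv, c, hc, hva⟩ := exists_add_mul_pow_of_mem_powerCombos_succ ha
  obtain ⟨d, hd, w, hw, hwb⟩ := exists_add_mul_of_mem_powerCombos_succ hb
  -- multiply `1 = v + c a^(n+1)` by `1 - d = b w` and use `a b = 1`
  have key : (1 : K) = d + (1 - d) * v + c * (a ^ n * w) := by
    linear_combination (1 - d) * hva + c * a ^ (n + 1) * hwb + c * a ^ n * w * hab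
  rw [key]
  refine add_mem (add_mem (le_powerCombos n.succ_ne_zero hd) ?_) ?_
  · exact mul_mem_powerCombos (hRI _ (R.sub_mem R.one_mem (hIR hd))) hv
  · exact mul_mem_powerCombos (hRI _ (hIR hc)) (pow_mul_mem_powerCombos hab hm hw)

/-- Chevalley's lemma: for a proper ideal `I` of `R` and `a * b = 1`, the element `1` does not
lie in both `I R[a]` and `I R[b]`. -/
theorem one_notMem_powerCombos (hIR : I ≤ R.toAddSubgroup)
    (hRI : ∀ r ∈ R, ∀ c ∈ I, r * c ∈ I) (h01 : (0 : K) ≠ 1) (h1 : (1 : K) ∉ I)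
    (hab : a * b = 1) (ha : 1 ∈ I.powerCombos a n) : 1 ∉ I.powerCombos b m := by
  induction h : n + m using Nat.strong_induction_on generalizing a b n m with
  | _ k ih =>
  intro hb
  match n, m with
  | 0, _ => exact h01.symm (by simpa [powerCombos_zero] using ha)
  | _, 0 => exact h01.symm (by simpa [powerCombos_zero] using hb)
  | 1, _ => exact h1 (by simpa [powerCombos_one] using ha)
  | _, 1 => exact h1 (by simpa [powerCombos_one] using hb)
  | n + 2, m + 2 =>
    rcases le_total m n with hmn | hnm
    · exact ih _ (by omega) hab
        (one_mem_powerCombos_of_one_mem_powerCombos_succ hIR hRI hab (by omega) ha hb) rfl hb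
    · exact ih _ (by omega) (mul_comm a b ▸ hab)
        (one_mem_powerCombos_of_one_mem_powerCombos_succ hIR hRI (mul_comm a b ▸ hab)
          (by omega) hb ha) rfl ha

end AddSubgroup

theorem Ring.inverse_eq_of_mul_eq_one {M : Type*} [CommMonoidWithZero M] {a b : M}
    (h : a * b = 1) : Ring.inverse a = b :=
  Ring.inverse_unit (Units.mkOfMulEqOne a b h)

namespace GradedField

variable {H : Type*} [CommGroup H] [DecidableEq H] {K : Type*} [CommRing K] (F : GradedField H K)

noncomputable instance : DirectSum.Decomposition F.comp := F.isInternal.chooseDecomposition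

theorem component_def (g : H) (w : K) :
    F.component g w = (DirectSum.decompose F.comp w g : K) := rfl

noncomputable def componentHom (g : H) : K →+ K :=
  (AddSubmonoidClass.subtype (F.comp g)).comp
    ((DFinsupp.evalAddMonoidHom g).comp (DirectSum.decomposeAddEquiv F.comp).toAddMonoidHom)

@[simp]
theorem componentHom_apply (g : H) (w : K) : F.componentHom g w = F.component g w := rfl

theorem component_add (g : H) (u v : K) :
    F.component g (u + v) = F.component g u + F.component g v :=
  map_add (F.componentHom g) u v

theorem component_mem (g : H) (w : K) : F.component g w ∈ F.comp g :=
  (DirectSum.decompose F.comp w g).2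

theorem component_of_mem {h : H} {w : K} (hw : w ∈ F.comp h) (g : H) :
    F.component g w = if h = g then w else 0 := by
  split_ifs with hg
  · exact hg ▸ DirectSum.decompose_of_mem_same F.comp hw
  · exact DirectSum.decompose_of_mem_ne F.comp hw hg

theorem component_one_one : F.component 1 (1 : K) = 1 := by
  simp [F.component_of_mem F.one_mem]

open Classical in
theorem sum_component (w : K) :
    ∑ g ∈ (DirectSum.decompose F.comp w).support, F.component g w = w :=
  DirectSum.sum_support_decompose F.comp w

theorem mem_of_forall_component_mem {S : AddSubgroup K} {w : K}
    (h : ∀ g, F.component g w ∈ S) : w ∈ S :=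
  F.sum_component w ▸ sum_mem fun g _ => h g

theorem component_mul_of_mem_left {h : H} {r : K} (hr : r ∈ F.comp h) (w : K) (g : H) :
    F.component g (r * w) = r * F.component (h⁻¹ * g) w := by
  classical
  conv_lhs => rw [← F.sum_component w, Finset.mul_sum, ← F.componentHom_apply, map_sum]
  have hmem : ∀ j, r * F.component j w ∈ F.comp (h * j) := fun j =>
    F.mul_mem hr (F.component_mem j w)
  simp only [componentHom_apply, F.component_of_mem (hmem _), ← eq_inv_mul_iff_mul_eq,
    Finset.sum_ite_eq']
  split_ifs with h0
  · rfl
  · rw [component_def, DFinsupp.notMem_support_iff.mp h0, ZeroMemClass.coe_zero, mul_zero]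

variable {F} {R : Subring K} {s : Set K} {w : K}

theorem Homogeneous.mul {u v : K} (hu : F.Homogeneous u) (hv : F.Homogeneous v) :
    F.Homogeneous (u * v) :=
  let ⟨g, hg⟩ := hu
  let ⟨h, hh⟩ := hv
  ⟨g * h, F.mul_mem hg hh⟩

theorem IsGradedSubring.component_mem (hR : F.IsGradedSubring R) (hw : w ∈ R) (g : H) :
    F.component g w ∈ R := by
  suffices AddSubgroup.closure {y | y ∈ R ∧ F.Homogeneous y} ≤
      R.toAddSubgroup.comap (F.componentHom g) from this (hR w hw)
  refine AddSubgroup.closure_le _ |>.mpr ?_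
  rintro y ⟨hyR, h, hyh⟩
  simp only [SetLike.mem_coe, AddSubgroup.mem_comap, componentHom_apply,
    F.component_of_mem hyh]
  split_ifs
  exacts [hyR, R.zero_mem]

theorem IsGradedSubring.mem_closure_homogeneous_of_le {R' : Subring K} (hR : F.IsGradedSubring R)
    (hRR' : R ≤ R') (hw : w ∈ R) :
    w ∈ AddSubgroup.closure {y | y ∈ R' ∧ F.Homogeneous y} :=
  AddSubgroup.closure_mono (fun _ hy => (⟨hRR' hy.1, hy.2⟩ : _ ∈ R' ∧ _)) (hR w hw)

variable (F) in
theorem isGradedSubring_of_component_mem (h : ∀ w ∈ R, ∀ g, F.component g w ∈ R) :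
    F.IsGradedSubring R := fun w hw =>
  F.mem_of_forall_component_mem fun g =>
    AddSubgroup.subset_closure ⟨h w hw g, g, F.component_mem g w⟩

variable (F) in
theorem isGradedSubring_closure
    (h : ∀ w ∈ s, w ∈ AddSubgroup.closure {y | y ∈ Subring.closure s ∧ F.Homogeneous y}) :
    F.IsGradedSubring (Subring.closure s) := by
  let M : Submonoid K :=
    { carrier := {y | y ∈ Subring.closure s ∧ F.Homogeneous y}
      mul_mem' := fun hu hv => ⟨Subring.mul_mem _ hu.1 hv.1, hu.2.mul hv.2⟩
      one_mem' := ⟨Subring.one_mem _, 1, F.one_mem⟩ }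
  have hM : ∀ w, w ∈ Subring.closure (M : Set K) ↔ w ∈ AddSubgroup.closure (M : Set K) :=
    fun w => by rw [Subring.mem_closure_iff, Submonoid.closure_eq]
  have hle : Subring.closure s ≤ Subring.closure (M : Set K) :=
    Subring.closure_le.mpr fun w hw => (hM w).mpr (h w hw)
  exact fun w hw => (hM w).mp (hle hw)

variable (F) in
theorem isUnit_of_mem_comp {h : H} (hw : w ∈ F.comp h) (h0 : w ≠ 0) : IsUnit w :=
  let ⟨y, _, hy⟩ := F.inv_mem hw h0
  IsUnit.of_mul_eq_one y hy

theorem IsGradedAut.component_map {σ : RingAut K} (hσ : F.IsGradedAut σ) (g : H) (w : K) :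
    F.component g (σ w) = σ (F.component g w) := by
  classical
  conv_lhs => rw [← F.sum_component w, map_sum, ← F.componentHom_apply, map_sum]
  have hmem : ∀ j, σ (F.component j w) ∈ F.comp j := fun j =>
    hσ j _ (F.component_mem j w)
  simp only [componentHom_apply, F.component_of_mem (hmem _), Finset.sum_ite_eq']
  split_ifs with h0
  · rfl
  · rw [component_def, DFinsupp.notMem_support_iff.mp h0, ZeroMemClass.coe_zero, map_zero]

theorem isGradedSubfield_fixedSubring {G : Subgroup (RingAut K)}
    (hG : ∀ σ ∈ G, F.IsGradedAut σ) : F.IsGradedSubfield (fixedSubring G) where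
  graded := F.isGradedSubring_of_component_mem fun w hw g σ hσ => by
    rw [← (hG σ hσ).component_map, hw σ hσ]
  inv_mem w hw := by
    rintro ⟨h, hwh⟩ h0
    obtain ⟨y, -, hwy⟩ := F.inv_mem hwh h0
    rw [Ring.inverse_eq_of_mul_eq_one hwy]
    intro σ hσ
    have : w * σ y = 1 := by rw [← hw σ hσ, ← map_mul, hwy, map_one]
    exact (left_inv_eq_right_inv (mul_comm w y ▸ hwy) this).symm

end GradedField

namespace GradedField

variable {H : Type*} [CommGroup H] [DecidableEq H] {K : Type*} [CommRing K] (F : GradedField H K)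
variable {L O x A : Subring K} {w : K}

def homogeneousNonunits (O : Subring K) : Set K := {w | F.Homogeneous w ∧ w ∈ O.nonunits}

variable {F}

theorem IsGradedValRing.exists_eq_mul_or_exists_eq_mul
    (hL : ∀ w ∈ L, F.Homogeneous w → w ≠ 0 → Ring.inverse w ∈ L)
    (hO : F.IsGradedValRing L O)
    {h : H} {p q : K} (hp : p ∈ F.comp h) (hq : q ∈ F.comp h) (hpO : p ∈ O) (hqO : q ∈ O) :
    (∃ u ∈ O, p = q * u) ∨ ∃ u ∈ O, q = p * u := by
  by_cases hq0 : q = 0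
  · exact .inr ⟨0, O.zero_mem, by rw [hq0, mul_zero]⟩
  obtain ⟨q', hq', hqq'⟩ := F.inv_mem hq hq0
  have hpu : p = q * (p * q') := by rw [mul_left_comm, hqq', mul_one]
  have hu1 : p * q' ∈ F.comp 1 := by simpa using F.mul_mem hp hq'
  have huL : p * q' ∈ L := L.mul_mem (hO.1 hpO)
    (Ring.inverse_eq_of_mul_eq_one hqq' ▸ hL q (hO.1 hqO) ⟨h, hq⟩ hq0)
  by_cases hu0 : p * q' = 0
  · exact .inl ⟨_, hu0 ▸ O.zero_mem, hpu⟩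
  rcases hO.2.2 _ huL ⟨1, hu1⟩ hu0 with huO | huO
  · exact .inl ⟨_, huO, hpu⟩
  · refine .inr ⟨_, huO, ?_⟩
    calc q = q * (p * q' * Ring.inverse (p * q')) := by
          rw [Ring.mul_inverse_cancel _ (F.isUnit_of_mem_comp hu1 hu0), mul_one]
      _ = p * Ring.inverse (p * q') := by rw [← mul_assoc, ← hpu]

/-- The maximal ideal of the degree-one part of a graded valuation ring. -/
def IsGradedValRing.degOneNonunits
    (hL : ∀ w ∈ L, F.Homogeneous w → w ≠ 0 → Ring.inverse w ∈ L)
    (hO : F.IsGradedValRing L O) :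
    AddSubgroup K where
  carrier := {w | w ∈ F.comp 1 ∧ w ∈ O.nonunits}
  zero_mem' := ⟨zero_mem _, O.zero_mem, fun t _ h => F.zero_ne_one (by rwa [zero_mul] at h)⟩
  neg_mem' := by
    rintro w ⟨hw1, hwO, hwn⟩
    exact ⟨neg_mem hw1, O.neg_mem hwO, fun t ht h => hwn (-t) (O.neg_mem ht) (by simpa using h)⟩
  add_mem' := by
    rintro p q ⟨hp1, hp⟩ ⟨hq1, hq⟩
    refine ⟨add_mem hp1 hq1, ?_⟩
    rcases hO.exists_eq_mul_or_exists_eq_mul hL hp1 hq1 hp.1 hq.1 with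
      ⟨u, hu, rfl⟩ | ⟨u, hu, rfl⟩
    · simpa [mul_add, add_comm] using Subring.mul_mem_nonunits hq (O.add_mem hu O.one_mem)
    · simpa [mul_add] using Subring.mul_mem_nonunits hp (O.add_mem O.one_mem hu)

theorem IsGradedValRing.component_one_mem_degOneNonunits
    (hL : ∀ w ∈ L, F.Homogeneous w → w ≠ 0 → Ring.inverse w ∈ L)
    (hO : F.IsGradedValRing L O)
    (hw : w ∈ O.idealSpan (F.homogeneousNonunits O)) :
    F.component 1 w ∈ hO.degOneNonunits hL := by
  suffices O.idealSpan (F.homogeneousNonunits O) ≤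
      (hO.degOneNonunits hL).comap (F.componentHom 1) from this hw
  refine AddSubgroup.closure_le _ |>.mpr ?_
  rintro _ ⟨r, hr, m, ⟨⟨h, hm⟩, hmO⟩, rfl⟩
  rw [SetLike.mem_coe, AddSubgroup.mem_comap, componentHom_apply, mul_comm r,
    F.component_mul_of_mem_left hm]
  have hdeg := F.mul_mem hm (F.component_mem (h⁻¹ * 1) r)
  rw [mul_inv_cancel_left] at hdeg
  exact ⟨hdeg, Subring.mul_mem_nonunits hmO (hO.2.1.component_mem hr _)⟩

theorem add_ne_one_of_mem_degOneNonunits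
    (hL : ∀ w ∈ L, F.Homogeneous w → w ≠ 0 → Ring.inverse w ∈ L)
    (hx : F.IsGradedValRing L x)
    (hA : F.IsGradedValRing ⊤ A) (hxA : x ≤ A) {p q : K} (hp : p ∈ hx.degOneNonunits hL)
    (hq : q ∈ hA.degOneNonunits fun _ _ _ _ => Subring.mem_top _) : p + q ≠ 1 := by
  intro h
  have hqx : q ∈ hx.degOneNonunits hL :=
    ⟨hq.1, Subring.mem_nonunits_of_le hxA
      (eq_sub_of_add_eq' h ▸ x.sub_mem x.one_mem hp.2.1) hq.2⟩
  exact (add_mem hp hqx).2.2 1 x.one_mem (by rw [h, mul_one])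

end GradedField

namespace Subring

variable {K : Type*} [CommRing K] {R x A : Subring K} {s t : Set K} {z : K}

theorem closure_union_le_sup_idealSpan (hxA : x ≤ A) (hs : s ⊆ A) :
    (closure (↑x ∪ s)).toAddSubgroup ≤ x.toAddSubgroup ⊔ A.idealSpan s := by
  intro w (hw : w ∈ closure (↑x ∪ s))
  induction hw using closure_induction with
  | mem w hw =>
    rcases hw with hw | hw
    exacts [AddSubgroup.mem_sup_left hw, AddSubgroup.mem_sup_right (subset_idealSpan hw)]
  | zero => exact zero_mem _
  | one => exact AddSubgroup.mem_sup_left x.one_mem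
  | add _ _ _ _ hu hv => exact add_mem hu hv
  | neg _ _ hu => exact neg_mem hu
  | mul u v _ _ hu hv =>
    obtain ⟨u₁, hu₁, u₂, hu₂, rfl⟩ := AddSubgroup.mem_sup.mp hu
    obtain ⟨v₁, hv₁, v₂, hv₂, rfl⟩ := AddSubgroup.mem_sup.mp hv
    have hu₂A : u₂ ∈ A := idealSpan_le hs hu₂
    have : (u₁ + u₂) * (v₁ + v₂) = u₁ * v₁ + (u₁ * v₂ + v₁ * u₂ + u₂ * v₂) := by ring
    rw [this]
    refine AddSubgroup.add_mem_sup (x.mul_mem hu₁ hv₁) (add_mem (add_mem ?_ ?_) ?_)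
    exacts [mul_mem_idealSpan_left (hxA hu₁) hv₂, mul_mem_idealSpan_left (hxA hv₁) hu₂,
      mul_mem_idealSpan_left hu₂A hv₂]

theorem idealSpan_closure_union_le (hxA : x ≤ A) (hs : s ⊆ A) (ht : t ⊆ A) :
    (closure (↑x ∪ s)).idealSpan t ≤ x.idealSpan t ⊔ A.idealSpan s := by
  refine AddSubgroup.closure_le _ |>.mpr ?_
  rintro _ ⟨r, hr, m, hm, rfl⟩
  obtain ⟨u, hu, v, hv, rfl⟩ :=
    AddSubgroup.mem_sup.mp (closure_union_le_sup_idealSpan hxA hs hr)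
  rw [add_mul, mul_comm v]
  exact AddSubgroup.add_mem_sup (mul_mem_idealSpan hu hm) (mul_mem_idealSpan_left (ht hm) hv)

theorem idealSpan_closure_insert_le :
    (closure (insert z ↑R)).idealSpan s ≤ ⨆ n, (R.idealSpan s).powerCombos z n := by
  have hT : ∀ {w}, w ∈ ⨆ n, (R.idealSpan s).powerCombos z n ↔
      ∃ n, w ∈ (R.idealSpan s).powerCombos z n :=
    AddSubgroup.mem_iSup_of_directed AddSubgroup.powerCombos_mono.directed_le
  have hmul : ∀ y ∈ closure (insert z ↑R), ∀ w ∈ ⨆ n, (R.idealSpan s).powerCombos z n,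
      y * w ∈ ⨆ n, (R.idealSpan s).powerCombos z n := by
    intro y hy
    induction hy using closure_induction with
    | mem y hy =>
      intro w hw
      obtain ⟨n, hn⟩ := hT.mp hw
      rcases hy with rfl | hy
      · exact hT.mpr ⟨n + 1, AddSubgroup.mul_mem_powerCombos_succ hn⟩
      · exact hT.mpr ⟨n, AddSubgroup.mul_mem_powerCombos
          (fun c hc => mul_mem_idealSpan_left hy hc) hn⟩
    | zero => simp [zero_mem]
    | one => simp
    | add u v _ _ hu hv => exact fun w hw => (add_mul u v w).symm ▸ add_mem (hu w hw) (hv w hw)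
    | neg u _ hu => exact fun w hw => (neg_mul u w).symm ▸ neg_mem (hu w hw)
    | mul u v _ _ hu hv => exact fun w hw => (mul_assoc u v w).symm ▸ hu _ (hv w hw)
  refine AddSubgroup.closure_le _ |>.mpr ?_
  rintro _ ⟨r, hr, m, hm, rfl⟩
  exact hmul r hr m (hT.mpr ⟨1, by rw [AddSubgroup.powerCombos_one]; exact subset_idealSpan hm⟩)

end Subring

namespace GradedField

variable {H : Type*} [CommGroup H] [DecidableEq H] {K : Type*} [CommRing K] {F : GradedField H K}
variable {L x A R : Subring K} {z : K}

variable (F) in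
/-- The subrings searched by Zorn's lemma for a graded valuation ring `A₀ ≤ A` over `x`. -/
structure IsExtensionCandidate (x A R : Subring K) : Prop where
  left_le : x ≤ R
  homogeneousNonunits_subset : F.homogeneousNonunits A ⊆ R
  le_right : R ≤ A
  graded : F.IsGradedSubring R
  one_notMem : (1 : K) ∉ R.idealSpan (F.homogeneousNonunits x)

theorem homogeneousNonunits_subset_self (O : Subring K) : F.homogeneousNonunits O ⊆ O :=
  fun _ hw => hw.2.1

theorem mem_homogeneousNonunits_of_mul_eq_one {y : K} (hz : F.Homogeneous z) (hzA : z ∈ A)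
    (hzy : z * y = 1) (hyA : y ∉ A) : z ∈ F.homogeneousNonunits A :=
  ⟨hz, hzA, fun t ht h => hyA (by rwa [left_inv_eq_right_inv (b := y) (by rwa [mul_comm]) h])⟩

theorem isExtensionCandidate_closure
    (hL : ∀ w ∈ L, F.Homogeneous w → w ≠ 0 → Ring.inverse w ∈ L)
    (hx : F.IsGradedValRing L x)
    (hA : F.IsGradedValRing ⊤ A) (hxA : x ≤ A) :
    F.IsExtensionCandidate x A (Subring.closure (↑x ∪ F.homogeneousNonunits A)) where
  left_le _ hw := Subring.subset_closure (.inl hw)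
  homogeneousNonunits_subset _ hw := Subring.subset_closure (.inr hw)
  le_right := Subring.closure_le.mpr (Set.union_subset hxA (homogeneousNonunits_subset_self A))
  graded := F.isGradedSubring_closure fun w hw => by
    rcases hw with hw | hw
    · exact hx.2.1.mem_closure_homogeneous_of_le (fun _ hy => Subring.subset_closure (.inl hy)) hw
    · exact AddSubgroup.subset_closure ⟨Subring.subset_closure (.inr hw), hw.1⟩
  one_notMem h1 := by
    -- the degree-one part of `1` would be a sum of non-units of `x` and of `A`
    obtain ⟨p, hp, q, hq, hpq⟩ := AddSubgroup.mem_sup.mp <|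
      Subring.idealSpan_closure_union_le hxA (homogeneousNonunits_subset_self A)
        ((homogeneousNonunits_subset_self x).trans hxA) h1
    refine add_ne_one_of_mem_degOneNonunits hL hx hA hxA
      (hx.component_one_mem_degOneNonunits hL hp) (hA.component_one_mem_degOneNonunits _ hq) ?_
    rw [← component_add, hpq, component_one_one]

theorem isExtensionCandidate_sSup {c : Set (Subring K)}
    (hc : ∀ R ∈ c, F.IsExtensionCandidate x A R)
    (hchain : IsChain (· ≤ ·) c) (hne : c.Nonempty) : F.IsExtensionCandidate x A (sSup c) := by
  obtain ⟨R, hR⟩ := hne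
  have hmem : ∀ {w}, w ∈ sSup c ↔ ∃ R' ∈ c, w ∈ R' :=
    Subring.mem_sSup_of_directedOn ⟨R, hR⟩ hchain.directedOn
  refine ⟨(hc R hR).left_le.trans (le_sSup hR),
    (hc R hR).homogeneousNonunits_subset.trans (le_sSup (α := Subring K) hR),
    sSup_le fun R' hR' => (hc R' hR').le_right, fun w hw => ?_, fun h1 => ?_⟩
  · obtain ⟨R', hR', hwR'⟩ := hmem.mp hw
    exact (hc R' hR').graded.mem_closure_homogeneous_of_le (le_sSup hR') hwR'
  · obtain ⟨R', hR', h1'⟩ :=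
      Subring.exists_mem_idealSpan_of_mem_sSup ⟨R, hR⟩ hchain.directedOn h1
    exact (hc R' hR').one_notMem h1'

/-- A homogeneous `l ∈ R ∩ L` outside `x` would have its inverse among the non-units of `x`,
putting `1 = l * l⁻¹` into the ideal they generate. -/
theorem IsExtensionCandidate.inf_eq (hL : F.IsGradedSubring L) (hx : F.IsGradedValRing L x)
    (hR : F.IsExtensionCandidate x A R) : R ⊓ L = x := by
  suffices ∀ l ∈ R, l ∈ L → F.Homogeneous l → l ∈ x by
    refine le_antisymm (fun w hw => ?_) (le_inf hR.left_le hx.1)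
    obtain ⟨hwR, hwL⟩ := Subring.mem_inf.mp hw
    exact F.mem_of_forall_component_mem (S := x.toAddSubgroup) fun g => this _
      (hR.graded.component_mem hwR g) (hL.component_mem hwL g) ⟨g, F.component_mem g w⟩
  rintro l hlR hlL ⟨g, hlg⟩
  by_cases hl0 : l = 0
  · exact hl0 ▸ x.zero_mem
  by_contra hlx
  obtain ⟨l', hl', hll'⟩ := F.inv_mem hlg hl0
  have hl'x : l' ∈ x := by
    simpa [hlx, Ring.inverse_eq_of_mul_eq_one hll'] using hx.2.2 l hlL ⟨g, hlg⟩ hl0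
  refine hR.one_notMem (hll' ▸ Subring.mul_mem_idealSpan hlR ⟨⟨g⁻¹, hl'⟩, hl'x, ?_⟩)
  exact fun t ht h => hlx (by rwa [left_inv_eq_right_inv hll' h])

theorem exists_one_mem_powerCombos_of_maximal (hR : Maximal (F.IsExtensionCandidate x A) R)
    (hzA : z ∈ A) (hz : F.Homogeneous z) (hzR : z ∉ R) :
    ∃ n, 1 ∈ (R.idealSpan (F.homogeneousNonunits x)).powerCombos z n := by
  by_contra! hcon
  have hRle : R ≤ Subring.closure (insert z ↑R) := fun _ hw => Subring.subset_closure (.inr hw)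
  have hzmem : z ∈ Subring.closure (insert z ↑R) := Subring.subset_closure (.inl rfl)
  refine hzR (hR.2 ⟨hR.1.left_le.trans hRle, hR.1.homogeneousNonunits_subset.trans hRle,
    Subring.closure_le.mpr (Set.insert_subset hzA hR.1.le_right), ?_, fun h1 => ?_⟩ hRle hzmem)
  · refine F.isGradedSubring_closure fun w hw => ?_
    rcases hw with rfl | hw
    · exact AddSubgroup.subset_closure ⟨hzmem, hz⟩
    · exact hR.1.graded.mem_closure_homogeneous_of_le hRle hw
  · obtain ⟨n, hn⟩ := (AddSubgroup.mem_iSup_of_directed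
      AddSubgroup.powerCombos_mono.directed_le).mp (Subring.idealSpan_closure_insert_le h1)
    exact hcon n hn

theorem isGradedValRing_of_maximal (hA : F.IsGradedValRing ⊤ A)
    (hR : Maximal (F.IsExtensionCandidate x A) R) : F.IsGradedValRing ⊤ R := by
  refine ⟨le_top, hR.1.graded, fun z _ hz hz0 => ?_⟩
  obtain ⟨h, hzh⟩ := hz
  obtain ⟨y, hyh, hzy⟩ := F.inv_mem hzh hz0
  rw [Ring.inverse_eq_of_mul_eq_one hzy]
  by_contra! hzyR
  have hyz : y * z = 1 := mul_comm z y ▸ hzy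
  by_cases hzA : z ∈ A
  · by_cases hyA : y ∈ A
    · obtain ⟨n, hn⟩ := exists_one_mem_powerCombos_of_maximal hR hzA ⟨h, hzh⟩ hzyR.1
      obtain ⟨m, hm⟩ := exists_one_mem_powerCombos_of_maximal hR hyA ⟨h⁻¹, hyh⟩ hzyR.2
      exact AddSubgroup.one_notMem_powerCombos
        (Subring.idealSpan_le ((homogeneousNonunits_subset_self x).trans hR.1.left_le))
        (fun _ hr _ hc => Subring.mul_mem_idealSpan_left hr hc) F.zero_ne_one hR.1.one_notMem
        hzy hn hm
    · exact hzyR.1 (hR.1.homogeneousNonunits_subset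
        (mem_homogeneousNonunits_of_mul_eq_one ⟨h, hzh⟩ hzA hzy hyA))
  · have hyA : y ∈ A := by
      simpa [hzA, Ring.inverse_eq_of_mul_eq_one hzy] using
        hA.2.2 z (Subring.mem_top z) ⟨h, hzh⟩ hz0
    exact hzyR.2 (hR.1.homogeneousNonunits_subset
      (mem_homogeneousNonunits_of_mul_eq_one ⟨h⁻¹, hyh⟩ hyA hyz hzA))

/-- Graded version of Chevalley's extension theorem, inside a prescribed graded valuation ring. -/
theorem exists_isGradedValRing_le_inf_eq (hL : F.IsGradedSubfield L)
    (hx : F.IsGradedValRing L x) (hA : F.IsGradedValRing ⊤ A) (hxA : x ≤ A) :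
    ∃ A₀, F.IsGradedValRing ⊤ A₀ ∧ A₀ ≤ A ∧ A₀ ⊓ L = x := by
  obtain ⟨R, -, hR⟩ := zorn_le_nonempty₀ {R | F.IsExtensionCandidate x A R}
    (fun c hc hchain y hy => ⟨sSup c, isExtensionCandidate_sSup hc hchain ⟨y, hy⟩,
      fun _ hz => le_sSup hz⟩) _ (isExtensionCandidate_closure hL.inv_mem hx hA hxA)
  replace hR : Maximal (F.IsExtensionCandidate x A) R := hR
  exact ⟨R, isGradedValRing_of_maximal hA hR, hR.1.le_right, hR.1.inf_eq hL.graded hx⟩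

end GradedField

theorem GradedField.preimage_generalizations_eq_general {H : Type*} [CommGroup H] [DecidableEq H]
    {K : Type*} [CommRing K] (F : GradedField H K) (k₀ : Subring K)
    (G : Subgroup (RingAut K))
    (hG : ∀ σ ∈ G, F.IsGradedAut σ)
    (x : Subring K) (hx : F.IsGradedValRing (fixedSubring G) x) (hxk : k₀ ≤ x) :
    {A : Subring K | (F.IsGradedValRing ⊤ A ∧ k₀ ≤ A) ∧ x ≤ A ⊓ fixedSubring G} =
      {A : Subring K | (F.IsGradedValRing ⊤ A ∧ k₀ ≤ A) ∧
        ∃ A₀ : Subring K, ((F.IsGradedValRing ⊤ A₀ ∧ k₀ ≤ A₀) ∧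
          A₀ ⊓ fixedSubring G = x) ∧ A₀ ≤ A} := by
  ext A
  constructor
  · rintro ⟨hA, hxA⟩
    obtain ⟨A₀, hA₀, hA₀A, hA₀L⟩ := exists_isGradedValRing_le_inf_eq
      (isGradedSubfield_fixedSubring hG) hx hA.1 (hxA.trans inf_le_left)
    exact ⟨hA, A₀, ⟨⟨hA₀, hxk.trans (hA₀L ▸ inf_le_left)⟩, hA₀L⟩, hA₀A⟩
  · rintro ⟨hA, A₀, ⟨-, hA₀L⟩, hA₀A⟩
    exact ⟨hA, hA₀L ▸ inf_le_inf_right _ hA₀A⟩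

/-- Let `K/k₀` be an extension of `H`-graded fields, `G` a finite group of graded
automorphisms of `K` fixing `k₀` pointwise, `L = K^G`, and `ψ : P_{K/k₀} → P_{L/k₀}`,
`A ↦ A ∩ L`.  For a point `x` of `P_{L/k₀}` with fiber `S = ψ⁻¹(x)`, the preimage under `ψ`
of the set of generalizations of `x` equals the set of generalizations of points of `S`. -/
theorem GradedField.preimage_generalizations_eq {H : Type*} [CommGroup H] [DecidableEq H]
    {K : Type*} [CommRing K] (F : GradedField H K) (k₀ : Subring K)
    (hk₀ : F.IsGradedSubfield k₀) (G : Subgroup (RingAut K)) [Finite G]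
    (hG : ∀ σ ∈ G, F.IsGradedAut σ) (hfix : ∀ σ ∈ G, ∀ x ∈ k₀, σ x = x)
    (x : Subring K) (hx : F.IsGradedValRing (fixedSubring G) x) (hxk : k₀ ≤ x) :
    {A : Subring K | (F.IsGradedValRing ⊤ A ∧ k₀ ≤ A) ∧ x ≤ A ⊓ fixedSubring G} =
      {A : Subring K | (F.IsGradedValRing ⊤ A ∧ k₀ ≤ A) ∧
        ∃ A₀ : Subring K, ((F.IsGradedValRing ⊤ A₀ ∧ k₀ ≤ A₀) ∧
          A₀ ⊓ fixedSubring G = x) ∧ A₀ ≤ A} :=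
  GradedField.preimage_generalizations_eq_general F k₀ G hG x hx hxk
end ZR
end

section
/- Let K/L be an extension of H-graded fields. The assignment F₁ ↦ F₁ ⊗_{L₁} L gives an inclusion-preserving bijection between intermediate fields of K₁/L₁ and intermediate graded fields F of K/L satisfying e_{F/L} = 1. In particular F = K₁ ⊗_{L₁} L is the unique intermediate graded field with e_{F/L} = 1 and f_{K/F} = 1, and it contains every intermediate graded field F' with e_{F'/L} = 1. -/
open scoped DirectSum

section ZR

variable {H : Type*} [CommGroup H] [DecidableEq H] {K : Type*} [CommRing K]

/-! The subring generated by `M ∪ L` is additively spanned by the products `m l` with `m ∈ M`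
and `l ∈ L` homogeneous; as `M ≤ K₁`, such a product has the degree of `l`. For `h ∈ H`, any
nonzero `l₀ ∈ L ∩ K_h` spans `L ∩ K_h` over `L₁ ≤ M`, so the sums of products of degree `h`
are again single products `m l₀`. Independence of the graded components then shows that every
homogeneous element of the span is a single product `m l`; gradedness, closure under inverses,
`F'₁ = M` and `e_{F'/L} = 1` all follow. Conversely, if `e_{F'/L} = 1`, every homogeneous
`y ∈ F'` of degree `h` is `(y l⁻¹) l` with `l ∈ L ∩ K_h` and `y l⁻¹ ∈ F'₁`, so `F'` is
generated by `F'₁ ∪ L`. -/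

theorem Subring.mul_mem_closure_union {R : Type*} [Ring R] {s t : Set R} {x y : R} (hx : x ∈ s)
    (hy : y ∈ t) : x * y ∈ Subring.closure (s ∪ t) :=
  mul_mem (subset_closure (Set.mem_union_left t hx)) (subset_closure (Set.mem_union_right s hy))

theorem Ring.inverse_eq_of_mul_eq_one_s15 {M₀ : Type*} [CommMonoidWithZero M₀] {x y : M₀}
    (h : x * y = 1) : Ring.inverse x = y := by
  simpa using (Ring.inverse_mul_eq_iff_eq_mul x 1 y (IsUnit.of_mul_eq_one y h)).2 h.symm

theorem iSupIndep.iSup_inf_eq_of_le {α ι : Type*} [CompleteLattice α] [IsModularLattice α]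
    {A T : ι → α} (hA : iSupIndep A) (hT : ∀ i, T i ≤ A i) (j : ι) :
    (⨆ i, T i) ⊓ A j = T j := by
  have hrest : (⨆ (i) (_ : i ≠ j), T i) ⊓ A j = ⊥ :=
    ((hA j).symm.mono_left (iSup₂_mono fun i _ => hT i)).eq_bot
  rw [iSup_split_single T j, sup_inf_assoc_of_le _ (hT j), hrest, sup_bot_eq]

namespace GradedField

open scoped Pointwise

variable {H : Type*} [CommGroup H] [DecidableEq H] {K : Type*} [CommRing K] (F : GradedField H K)

theorem isUnit_of_mem_comp_s15 {h : H} {x : K} (hx : x ∈ F.comp h) (hx0 : x ≠ 0) : IsUnit x :=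
  let ⟨y, _, hxy⟩ := F.inv_mem hx hx0
  IsUnit.of_mul_eq_one y hxy

theorem inverse_mem_comp {h : H} {x : K} (hx : x ∈ F.comp h) (hx0 : x ≠ 0) :
    Ring.inverse x ∈ F.comp h⁻¹ := by
  obtain ⟨y, hy, hxy⟩ := F.inv_mem hx hx0
  rwa [Ring.inverse_eq_of_mul_eq_one_s15 hxy]

/-- The degree-`h` part of `M ⊗_{L₁} L`, realized inside `K`. -/
def tensorComp (L M : Subring K) (h : H) : Set K := (M : Set K) * ((L : Set K) ∩ F.comp h)

variable {L M : Subring K}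

theorem tensorComp_subset_comp (hM : M ≤ F.oneComponent) (h : H) :
    F.tensorComp L M h ⊆ F.comp h := by
  rintro _ ⟨m, hm, l, ⟨-, hl⟩, rfl⟩
  simpa using F.mul_mem (hM hm) hl

theorem tensorComp_subset_closure_union (h : H) :
    F.tensorComp L M h ⊆ Subring.closure ((M : Set K) ∪ L) := by
  rintro _ ⟨m, hm, l, ⟨hl, -⟩, rfl⟩
  exact Subring.mul_mem_closure_union hm hl

theorem mul_mem_tensorComp {g h : H} {x y : K} (hx : x ∈ F.tensorComp L M g)
    (hy : y ∈ F.tensorComp L M h) : x * y ∈ F.tensorComp L M (g * h) := by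
  obtain ⟨m, hm, l, ⟨hlL, hl⟩, rfl⟩ := hx
  obtain ⟨m', hm', l', ⟨hlL', hl'⟩, rfl⟩ := hy
  exact ⟨m * m', M.mul_mem hm hm', l * l', ⟨L.mul_mem hlL hlL', F.mul_mem hl hl'⟩, by ring⟩

theorem add_mem_tensorComp (hL : F.IsGradedSubfield L) (hLM : F.oneComponent ⊓ L ≤ M)
    {h : H} {x y : K} (hx : x ∈ F.tensorComp L M h) (hy : y ∈ F.tensorComp L M h) :
    x + y ∈ F.tensorComp L M h := by
  obtain ⟨m, hm, l, ⟨hlL, hl⟩, rfl⟩ := hx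
  obtain ⟨m', hm', l', ⟨hlL', hl'⟩, rfl⟩ := hy
  rcases eq_or_ne l 0 with rfl | hl0
  · simpa using ⟨m', hm', l', ⟨hlL', hl'⟩, rfl⟩
  have hratio : l' * Ring.inverse l ∈ M :=
    hLM ⟨F.mem_oneComponent.2 (by simpa using F.mul_mem hl' (F.inverse_mem_comp hl hl0)),
      L.mul_mem hlL' (hL.inv_mem l hlL ⟨h, hl⟩ hl0)⟩
  refine ⟨m + m' * (l' * Ring.inverse l), M.add_mem hm (M.mul_mem hm' hratio), l, ⟨hlL, hl⟩,
    ?_⟩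
  beta_reduce
  linear_combination m' * l' * Ring.inverse_mul_cancel l (F.isUnit_of_mem_comp_s15 hl hl0)

theorem mem_tensorComp_of_mem_closure (hL : F.IsGradedSubfield L)
    (hLM : F.oneComponent ⊓ L ≤ M) {h : H} {x : K}
    (hx : x ∈ AddSubgroup.closure (F.tensorComp L M h)) : x ∈ F.tensorComp L M h := by
  induction hx using AddSubgroup.closure_induction with
  | mem _ hy => exact hy
  | zero => exact ⟨0, M.zero_mem, 0, ⟨L.zero_mem, (F.comp h).zero_mem⟩, mul_zero 0⟩
  | add _ _ _ _ hx hy => exact F.add_mem_tensorComp hL hLM hx hy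
  | neg _ _ hx =>
    obtain ⟨m, hm, l, hl, rfl⟩ := hx
    exact ⟨-m, M.neg_mem hm, l, hl, neg_mul m l⟩

def pureTensors (L M : Subring K) : Submonoid K where
  carrier := ⋃ h, F.tensorComp L M h
  one_mem' := Set.mem_iUnion.2 ⟨1, 1, M.one_mem, 1, ⟨L.one_mem, F.one_mem⟩, mul_one 1⟩
  mul_mem' := by
    simp only [Set.mem_iUnion]
    rintro _ _ ⟨g, hx⟩ ⟨h, hy⟩
    exact ⟨g * h, F.mul_mem_tensorComp hx hy⟩

theorem closure_union_toAddSubgroup (hL : F.IsGradedSubfield L) :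
    (Subring.closure ((M : Set K) ∪ L)).toAddSubgroup =
      AddSubgroup.closure (F.pureTensors L M) := by
  have hclosure : Subring.closure ((M : Set K) ∪ L) = Subring.closure (F.pureTensors L M) := by
    apply le_antisymm
    · rw [Subring.closure_le]
      rintro x (hx | hx)
      · exact Subring.subset_closure
          (Set.mem_iUnion.2 ⟨1, x, hx, 1, ⟨L.one_mem, F.one_mem⟩, mul_one x⟩)
      · have hhomog : AddSubgroup.closure {y | y ∈ L ∧ F.Homogeneous y} ≤
            (Subring.closure (F.pureTensors L M : Set K)).toAddSubgroup := by
          rw [AddSubgroup.closure_le]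
          rintro y ⟨hyL, h, hy⟩
          exact Subring.subset_closure
            (Set.mem_iUnion.2 ⟨h, 1, M.one_mem, y, ⟨hyL, hy⟩, one_mul y⟩)
        exact hhomog (hL.graded x hx)
    · exact Subring.closure_le.2 (Set.iUnion_subset F.tensorComp_subset_closure_union)
  ext x
  rw [Subring.mem_toAddSubgroup, hclosure, Subring.mem_closure_iff, Submonoid.closure_eq]

theorem mem_tensorComp_of_mem_closure_union (hL : F.IsGradedSubfield L)
    (hM : M ≤ F.oneComponent) (hLM : F.oneComponent ⊓ L ≤ M) {g : H} {x : K}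
    (hxg : x ∈ F.comp g) (hx : x ∈ Subring.closure ((M : Set K) ∪ L)) :
    x ∈ F.tensorComp L M g := by
  have hsum : x ∈ (⨆ h, AddSubgroup.closure (F.tensorComp L M h)) ⊓ F.comp g := by
    refine ⟨?_, hxg⟩
    rw [← AddSubgroup.closure_iUnion]
    exact (F.closure_union_toAddSubgroup hL).le hx
  rw [F.isInternal.addSubgroup_iSupIndep.iSup_inf_eq_of_le
    (fun h => (AddSubgroup.closure_le _).2 (F.tensorComp_subset_comp hM h))] at hsum
  exact F.mem_tensorComp_of_mem_closure hL hLM hsum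

theorem isGradedSubfield_closure_union (hL : F.IsGradedSubfield L) (hM : M ≤ F.oneComponent)
    (hLM : F.oneComponent ⊓ L ≤ M) (hMinv : ∀ x ∈ M, x ≠ 0 → Ring.inverse x ∈ M) :
    F.IsGradedSubfield (Subring.closure ((M : Set K) ∪ L)) where
  graded x hx := by
    refine AddSubgroup.closure_mono ?_ ((F.closure_union_toAddSubgroup hL).le hx)
    simp only [pureTensors, Submonoid.coe_set_mk, Subsemigroup.coe_set_mk,
      Set.iUnion_subset_iff]
    exact fun h y hy =>
      ⟨F.tensorComp_subset_closure_union h hy, h, F.tensorComp_subset_comp hM h hy⟩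
  inv_mem x hx := by
    rintro ⟨g, hxg⟩ hx0
    obtain ⟨m, hm, l, ⟨hlL, hl⟩, rfl⟩ := F.mem_tensorComp_of_mem_closure_union hL hM hLM hxg hx
    rw [Ring.mul_inverse_rev, mul_comm]
    exact Subring.mul_mem_closure_union (hMinv m hm (left_ne_zero_of_mul hx0))
      (hL.inv_mem l hlL ⟨g, hl⟩ (right_ne_zero_of_mul hx0))

theorem closure_union_inf_oneComponent (hL : F.IsGradedSubfield L) (hM : M ≤ F.oneComponent)
    (hLM : F.oneComponent ⊓ L ≤ M) :
    Subring.closure ((M : Set K) ∪ L) ⊓ F.oneComponent = M := by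
  refine le_antisymm (fun x ⟨hx, hx1⟩ => ?_)
    fun m hm => ⟨Subring.subset_closure (Or.inl hm), hM hm⟩
  obtain ⟨m, hm, l, ⟨hlL, hl⟩, rfl⟩ := F.mem_tensorComp_of_mem_closure_union hL hM hLM hx1 hx
  exact M.mul_mem hm (hLM ⟨hl, hlL⟩)

theorem exists_homogeneous_closure_union_iff (hL : F.IsGradedSubfield L)
    (hM : M ≤ F.oneComponent) (hLM : F.oneComponent ⊓ L ≤ M) (h : H) :
    (∃ x ∈ F.comp h, x ≠ 0 ∧ x ∈ Subring.closure ((M : Set K) ∪ L)) ↔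
      ∃ x ∈ F.comp h, x ≠ 0 ∧ x ∈ L := by
  refine ⟨fun ⟨x, hxh, hx0, hx⟩ => ?_, fun ⟨x, hxh, hx0, hx⟩ =>
    ⟨x, hxh, hx0, Subring.subset_closure (Or.inr hx)⟩⟩
  obtain ⟨m, -, l, ⟨hlL, hl⟩, rfl⟩ := F.mem_tensorComp_of_mem_closure_union hL hM hLM hxh hx
  exact ⟨l, hl, right_ne_zero_of_mul hx0, hlL⟩

theorem closure_union_le_closure_union_iff (hL : F.IsGradedSubfield L) {M' : Subring K}
    (hM : M ≤ F.oneComponent) (hM' : M' ≤ F.oneComponent) (hLM' : F.oneComponent ⊓ L ≤ M') :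
    M ≤ M' ↔ Subring.closure ((M : Set K) ∪ L) ≤ Subring.closure ((M' : Set K) ∪ L) := by
  refine ⟨fun hMM' => Subring.closure_mono (Set.union_subset_union_left _ hMM'),
    fun hle m hm => ?_⟩
  rw [← F.closure_union_inf_oneComponent hL hM' hLM']
  exact ⟨hle (Subring.subset_closure (Or.inl hm)), hM hm⟩

theorem eq_closure_inf_oneComponent_union {F' : Subring K} (hF' : F.IsGradedSubfield F')
    (hLF' : L ≤ F')
    (he : ∀ h : H, (∃ x ∈ F.comp h, x ≠ 0 ∧ x ∈ F') ↔ ∃ x ∈ F.comp h, x ≠ 0 ∧ x ∈ L) :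
    F' = Subring.closure ((↑(F' ⊓ F.oneComponent) : Set K) ∪ L) := by
  refine le_antisymm (fun x hx => ?_)
    (Subring.closure_le.2 (Set.union_subset (fun _ hy => hy.1) hLF'))
  refine (AddSubgroup.closure_le (Subring.closure _).toAddSubgroup).2 ?_ (hF'.graded x hx)
  rintro y ⟨hyF', g, hy⟩
  rcases eq_or_ne y 0 with rfl | hy0
  · exact zero_mem _
  obtain ⟨l, hl, hl0, hlL⟩ := (he g).1 ⟨y, hy, hy0, hyF'⟩
  have hratio : y * Ring.inverse l ∈ F' ⊓ F.oneComponent :=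
    ⟨F'.mul_mem hyF' (hF'.inv_mem l (hLF' hlL) ⟨g, hl⟩ hl0),
      F.mem_oneComponent.2 (by simpa using F.mul_mem hy (F.inverse_mem_comp hl hl0))⟩
  rw [← Ring.inverse_mul_cancel_right l y (F.isUnit_of_mem_comp_s15 hl hl0)]
  exact Subring.mul_mem_closure_union hratio hlL

end GradedField

/-- For an extension `K/L` of `H`-graded fields, the assignment `M ↦ M ⊗_{L₁} L` (realized
inside `K` as the subring generated by `M ∪ L`) is an inclusion-preserving bijection between
intermediate fields of `K₁/L₁` and intermediate graded fields `F'` of `K/L` with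
`e_{F'/L} = 1`.  In particular `K₁ ⊗_{L₁} L` is the unique intermediate graded field with
`e = 1` and `f_{K/·} = 1`, and it contains every intermediate graded field with `e = 1`. -/
theorem GradedField.intermediate_unramified_bijection {H : Type*} [CommGroup H]
    [DecidableEq H] {K : Type*} [CommRing K] (F : GradedField H K) (L : Subring K)
    (hL : F.IsGradedSubfield L) :
    -- the map lands in intermediate graded fields with `e = 1`, and `F'₁ = M`
    (∀ M : Subring K, M ≤ F.oneComponent → F.oneComponent ⊓ L ≤ M →
      (∀ x ∈ M, x ≠ 0 → Ring.inverse x ∈ M) →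
      F.IsGradedSubfield (Subring.closure ((M : Set K) ∪ (L : Set K))) ∧
        L ≤ Subring.closure ((M : Set K) ∪ (L : Set K)) ∧
        Subring.closure ((M : Set K) ∪ (L : Set K)) ⊓ F.oneComponent = M ∧
        (∀ h : H, (∃ x ∈ F.comp h, x ≠ 0 ∧ x ∈ Subring.closure ((M : Set K) ∪ (L : Set K)))
          ↔ ∃ x ∈ F.comp h, x ≠ 0 ∧ x ∈ L)) ∧
    -- surjectivity: every intermediate graded field with `e = 1` arises this way
    (∀ F' : Subring K, F.IsGradedSubfield F' → L ≤ F' →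
      (∀ h : H, (∃ x ∈ F.comp h, x ≠ 0 ∧ x ∈ F') ↔ ∃ x ∈ F.comp h, x ≠ 0 ∧ x ∈ L) →
      F' = Subring.closure ((↑(F' ⊓ F.oneComponent) : Set K) ∪ (L : Set K))) ∧
    -- inclusion-preserving in both directions
    (∀ M M' : Subring K, M ≤ F.oneComponent → F.oneComponent ⊓ L ≤ M →
      (∀ x ∈ M, x ≠ 0 → Ring.inverse x ∈ M) →
      M' ≤ F.oneComponent → F.oneComponent ⊓ L ≤ M' →
      (∀ x ∈ M', x ≠ 0 → Ring.inverse x ∈ M') →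
      (M ≤ M' ↔ Subring.closure ((M : Set K) ∪ (L : Set K)) ≤
        Subring.closure ((M' : Set K) ∪ (L : Set K)))) ∧
    -- `K₁ ⊗_{L₁} L` has `e = 1` and `f_{K/·} = 1`, and contains all `F'` with `e = 1`
    (∀ h : H, (∃ x ∈ F.comp h, x ≠ 0 ∧
        x ∈ Subring.closure ((F.oneComponent : Set K) ∪ (L : Set K))) ↔
      ∃ x ∈ F.comp h, x ≠ 0 ∧ x ∈ L) ∧
    F.oneComponent ≤ Subring.closure ((F.oneComponent : Set K) ∪ (L : Set K)) ∧
    ∀ F' : Subring K, F.IsGradedSubfield F' → L ≤ F' →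
      (∀ h : H, (∃ x ∈ F.comp h, x ≠ 0 ∧ x ∈ F') ↔ ∃ x ∈ F.comp h, x ≠ 0 ∧ x ∈ L) →
      F' ≤ Subring.closure ((F.oneComponent : Set K) ∪ (L : Set K)) := by
  refine ⟨fun M hM hLM hMinv => ⟨F.isGradedSubfield_closure_union hL hM hLM hMinv,
      fun x hx => Subring.subset_closure (Or.inr hx), F.closure_union_inf_oneComponent hL hM hLM,
      F.exists_homogeneous_closure_union_iff hL hM hLM⟩,
    fun F' hF' hLF' he => F.eq_closure_inf_oneComponent_union hF' hLF' he,
    fun M M' hM _ _ hM' hLM' _ => F.closure_union_le_closure_union_iff hL hM hM' hLM',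
    F.exists_homogeneous_closure_union_iff hL le_rfl inf_le_left,
    fun x hx => Subring.subset_closure (Or.inl hx), fun F' hF' hLF' he => ?_⟩
  rw [F.eq_closure_inf_oneComponent_union hF' hLF' he]
  exact Subring.closure_mono (Set.union_subset_union_left _ inf_le_right)
end ZR
end
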